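/- IW-Maximin is independent-winner-consistent: if candidate c would win under standard Maximin when c is split off as a singleton alliance (i.e., c's alliance-aware score computed as a singleton is maximal over all candidates with appropriate tie-breaking), then IW-Maximin elects c in the original election. -/
import Mathlib


/-- `Pref v a b` is the number of voters preferring `a` to `b`. -/
def Pref {C : Type*} [Fintype C] {n : ℕ} (v : Fin n → C → ℕ) (a b : C) : ℕ :=
  (Finset.univ.filter (fun i => v i a < v i b)).card

/-- Standard maximin score of `x` on candidate set `Cs`: the minimum over the
other candidates `y` of `Pref x y`. -/
noncomputable def maximinScore {C : Type*} [Fintype C] [DecidableEq C] {n : ℕ}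
    (Cs : Finset C) (v : Fin n → C → ℕ) (x : C) : ℕ∞ :=
  (Cs.erase x).inf (fun y => (Pref v x y : ℕ∞))

/-- Alliance-aware maximin score of `x`: the minimum over the opponents `x'` of
`x` (candidates of `Cs` outside `A x`) of `Pref x x'`. -/
noncomputable def aaMaximinScore {C : Type*} [Fintype C] [DecidableEq C] {n : ℕ}
    (Cs : Finset C) (A : C → Finset C) (v : Fin n → C → ℕ) (x : C) : ℕ∞ :=
  ((Cs \ A x).inf (fun y => (Pref v x y : ℕ∞)))

/-- `x` maximizes `g` on `s`, and is minimal w.r.t. the fixed tie-breaking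
linear order among the maximizers. -/
def IsBest {C : Type*} [LinearOrder C] {β : Type*} [LinearOrder β]
    (s : Finset C) (g : C → β) (x : C) : Prop :=
  x ∈ s ∧ (∀ y ∈ s, g y ≤ g x) ∧ ∀ y ∈ s, g y = g x → x ≤ y

/-- `w` is the IW-Maximin winner: first select the alliance of the candidate
with maximal alliance-aware maximin score; then elect, within that alliance,
the candidate with maximal standard maximin score. -/
def IWMaximinWinner {C : Type*} [Fintype C] [LinearOrder C] {n : ℕ}
    (Cs : Finset C) (A : C → Finset C) (v : Fin n → C → ℕ) (w : C) : Prop :=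
  ∃ t, IsBest Cs (fun x => aaMaximinScore Cs A v x) t ∧
    IsBest (Cs ∩ A t) (fun x => maximinScore Cs v x) w

/-- `w` is the SW-Maximin winner: all candidates with alliance-aware maximin
score `> n/2` advance to a runoff decided by standard Maximin on the restricted
election; if no candidate advances, the candidate with the highest
alliance-aware maximin score wins. -/
def SWMaximinWinner {C : Type*} [Fintype C] [LinearOrder C] {n : ℕ}
    (Cs : Finset C) (A : C → Finset C) (v : Fin n → C → ℕ) (w : C) : Prop :=
  let T := Cs.filter (fun x => (n : ℕ∞) < 2 * aaMaximinScore Cs A v x)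
  (T.Nonempty ∧ IsBest T (fun x => maximinScore T v x) w) ∨
  (T = ∅ ∧ IsBest Cs (fun x => aaMaximinScore Cs A v x) w)


theorem exists_isBest {C : Type*} [LinearOrder C] {β : Type*} [LinearOrder β]
    (s : Finset C) (hs : s.Nonempty) (g : C → β) : ∃ t, IsBest s g t := by
  obtain ⟨m, hm, hmax⟩ := s.exists_max_image g hs
  have hF : (s.filter (fun y => g y = g m)).Nonempty := ⟨m, by simp [hm]⟩
  refine ⟨(s.filter (fun y => g y = g m)).min' hF, ?_, ?_, ?_⟩
  · have := Finset.min'_mem _ hF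
    exact (Finset.mem_filter.mp this).1
  · intro y hy
    have := Finset.min'_mem _ hF
    have ht := (Finset.mem_filter.mp this).2
    rw [ht]; exact hmax y hy
  · intro y hy hgy
    have := Finset.min'_mem _ hF
    have ht := (Finset.mem_filter.mp this).2
    exact Finset.min'_le _ _ (Finset.mem_filter.mpr ⟨hy, hgy.trans ht⟩)

/-- IW-Maximin is independent-winner-consistent: if `c` wins under IW-Maximin
in the election where `A(c)` is split into the singleton `{c}` and
`A(c) \ {c}` (there `c`'s alliance-aware maximin score is its standard maximin
score), then IW-Maximin elects `c` in the original election. -/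
theorem iw_maximin_iw_consistent {C : Type*} [Fintype C] [LinearOrder C] {n : ℕ}
    (v : Fin n → C → ℕ) (hinj : ∀ i, Function.Injective (v i))
    (Cs : Finset C) (A : C → Finset C)
    (hA1 : ∀ x, x ∈ A x) (hA2 : ∀ x y, y ∈ A x → A y = A x)
    (hAsub : ∀ x ∈ Cs, A x ⊆ Cs)
    (c : C) (hc : c ∈ Cs)
    (htwo : ∃ x ∈ Cs, x ∉ A c)
    (A' : C → Finset C)
    (hA' : A' = fun x => if x = c then {c} else (A x).erase c)
    (hindep : IWMaximinWinner Cs A' v c) :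
    IWMaximinWinner Cs A v c := by
  subst hA'
  obtain ⟨t', ht'best, hcbest⟩ := hindep
  have ht'c : t' = c := by
    have hcmem := hcbest.1
    rw [Finset.mem_inter] at hcmem
    by_contra h
    have := hcmem.2
    simp only [h, if_neg] at this
    exact (Finset.notMem_erase c _) this
  rw [ht'c] at ht'best hcbest
  set A' : C → Finset C := fun x => if x = c then ({c} : Finset C) else (A x).erase c with hA'def
  -- score facts
  have hceq : aaMaximinScore Cs A' v c = maximinScore Cs v c := by
    unfold aaMaximinScore maximinScore
    congr 1
    simp [A', Finset.sdiff_singleton_eq_erase]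
  have hout : ∀ x, x ∉ A c → aaMaximinScore Cs A' v x = aaMaximinScore Cs A v x := by
    intro x hx
    have hxc : x ≠ c := fun h => hx (h ▸ hA1 c)
    have hcx : c ∉ A x := fun h => hx ((hA2 x c h) ▸ hA1 x)
    unfold aaMaximinScore
    congr 1
    simp [A', hxc, Finset.erase_eq_of_notMem hcx]
  have hcle : aaMaximinScore Cs A' v c ≤ aaMaximinScore Cs A v c := by
    apply Finset.inf_mono
    apply Finset.sdiff_subset_sdiff (le_refl _)
    simp [A', Finset.singleton_subset_iff, hA1 c]
  have hmate : ∀ y, y ≠ c → maximinScore Cs v y ≤ aaMaximinScore Cs A' v y := by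
    intro y hy
    apply Finset.inf_mono
    intro z hz
    rw [Finset.mem_sdiff] at hz
    rw [Finset.mem_erase]
    refine ⟨?_, hz.1⟩
    intro hzy
    apply hz.2
    rw [hzy]
    simp only [A']
    rw [if_neg hy]
    exact Finset.mem_erase.mpr ⟨hy, hA1 y⟩
  obtain ⟨t, htbest⟩ := exists_isBest Cs ⟨c, hc⟩ (fun x => aaMaximinScore Cs A v x)
  have htAc : t ∈ A c := by
    by_contra h
    have h1 : aaMaximinScore Cs A v t = aaMaximinScore Cs A' v t := (hout t h).symm
    have h2 : aaMaximinScore Cs A' v t ≤ aaMaximinScore Cs A' v c := ht'best.2.1 t htbest.1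
    have h3 : aaMaximinScore Cs A v c ≤ aaMaximinScore Cs A v t := htbest.2.1 c hc
    have heq1 : aaMaximinScore Cs A' v t = aaMaximinScore Cs A' v c :=
      le_antisymm h2 (le_trans hcle (le_trans h3 (le_of_eq h1)))
    have heq2 : aaMaximinScore Cs A v c = aaMaximinScore Cs A v t :=
      le_antisymm h3 (by rw [h1]; exact h2.trans hcle)
    have hct : c ≤ t := ht'best.2.2 t htbest.1 heq1
    have htc : t ≤ c := htbest.2.2 c hc heq2
    exact h ((le_antisymm htc hct) ▸ hA1 c)
  refine ⟨t, htbest, ?_, ?_, ?_⟩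
  · rw [Finset.mem_inter, hA2 c t htAc]
    exact ⟨hc, hA1 c⟩
  · intro y hy
    rcases eq_or_ne y c with rfl | hyc
    · exact le_refl _
    · calc maximinScore Cs v y ≤ aaMaximinScore Cs A' v y := hmate y hyc
        _ ≤ aaMaximinScore Cs A' v c := ht'best.2.1 y (Finset.mem_inter.mp hy).1
        _ = maximinScore Cs v c := hceq
  · intro y hy hgy
    rcases eq_or_ne y c with rfl | hyc
    · exact le_refl _
    · have h1 : maximinScore Cs v y ≤ aaMaximinScore Cs A' v y := hmate y hyc
      have h2 : aaMaximinScore Cs A' v y ≤ aaMaximinScore Cs A' v c := ht'best.2.1 y (Finset.mem_inter.mp hy).1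
      have : aaMaximinScore Cs A' v y = aaMaximinScore Cs A' v c := by
        apply le_antisymm h2
        rw [hceq]
        have hgy' : maximinScore Cs v y = maximinScore Cs v c := hgy
        rw [← hgy']
        exact h1
      exact ht'best.2.2 y (Finset.mem_inter.mp hy).1 this
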